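/- Let (M,⟨·,·⟩,φ,ζ) be a (2n+1)-dimensional almost contact metric manifold whose intrinsic torsion ξ is of type C_5 ⊕ C_6 ⊕ C_7 ⊕ C_8 ⊕ C_9 ⊕ C_10 ⊕ C_12, so that ξ_X = (∇_Xη)⊗ζ − η⊗(∇_Xζ). Then the structure is harmonic if and only if ∇*∇ζ = ‖∇ζ‖²ζ, that is, if and only if the characteristic vector field ζ is a harmonic unit vector field. -/

import Mathlib

open scoped BigOperators

noncomputable section

/-- The Kulkarni–Nomizu product of two covariant 2-tensors. -/
def KN {Fn VF : Type*} [CommRing Fn] (a b : VF → VF → Fn) (X Y Z W : VF) : Fn :=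
  a X Z * b Y W - a Y Z * b X W + a Y W * b X Z - a X W * b Y Z

/-- Abstract model of the global calculus of a closed oriented Riemannian manifold of
dimension `m`: a commutative ring `Fn` of smooth functions (an `ℝ`-algebra), a module `VF`
of vector fields over `Fn`, a Riemannian metric `g`, the directional derivative `D` of
functions along vector fields, the Levi-Civita connection `nabla`, the Lie bracket, a
global orthonormal frame `e`, and the integral against the Riemannian volume form. -/
structure RiemannianData (m : ℕ) (Fn VF : Type*) [CommRing Fn] [Algebra ℝ Fn]
    [AddCommGroup VF] [Module Fn VF] where
  g : VF → VF → Fn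
  D : VF → Fn → Fn
  nabla : VF → VF → VF
  bracket : VF → VF → VF
  e : Fin m → VF
  integral : Fn → ℝ
  g_symm : ∀ X Y, g X Y = g Y X
  g_addLeft : ∀ X Y Z, g (X + Y) Z = g X Z + g Y Z
  g_smulLeft : ∀ (f : Fn) (X Y : VF), g (f • X) Y = f * g X Y
  orthonormal : ∀ i j, g (e i) (e j) = if i = j then 1 else 0
  D_add : ∀ X f h, D X (f + h) = D X f + D X h
  D_mul : ∀ X f h, D X (f * h) = f * D X h + h * D X f
  D_const : ∀ X (r : ℝ), D X (algebraMap ℝ Fn r) = 0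
  nabla_addLeft : ∀ X Y Z, nabla (X + Y) Z = nabla X Z + nabla Y Z
  nabla_smulLeft : ∀ (f : Fn) X Y, nabla (f • X) Y = f • nabla X Y
  nabla_addRight : ∀ X Y Z, nabla X (Y + Z) = nabla X Y + nabla X Z
  nabla_leibniz : ∀ X (f : Fn) Y, nabla X (f • Y) = f • nabla X Y + D X f • Y
  torsion_free : ∀ X Y, nabla X Y - nabla Y X = bracket X Y
  metric_compat : ∀ X Y Z, D X (g Y Z) = g (nabla X Y) Z + g Y (nabla X Z)
  integral_add : ∀ f h, integral (f + h) = integral f + integral h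
  integral_smul : ∀ (r : ℝ) f, integral (r • f) = r * integral f

namespace RiemannianData

variable {m : ℕ} {Fn VF : Type*} [CommRing Fn] [Algebra ℝ Fn]
  [AddCommGroup VF] [Module Fn VF] (Md : RiemannianData m Fn VF)

/-- The Riemann curvature operator `R_{X,Y}Z`. -/
def Rm (X Y Z : VF) : VF :=
  Md.nabla X (Md.nabla Y Z) - Md.nabla Y (Md.nabla X Z) - Md.nabla (Md.bracket X Y) Z

/-- The Ricci curvature tensor. -/
def Ric (X Y : VF) : Fn := ∑ i, Md.g (Md.Rm (Md.e i) X Y) (Md.e i)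

/-- The scalar curvature. -/
def scal : Fn := ∑ i, Md.Ric (Md.e i) (Md.e i)

/-- The Riemann curvature as a `(0,4)`-tensor. -/
def Rm4 (X Y Z W : VF) : Fn := Md.g (Md.Rm X Y Z) W

/-- The Schouten tensor. -/
def schouten (X Y : VF) : Fn :=
  ((m : ℝ) - 2)⁻¹ • (Md.Ric X Y - (2 * ((m : ℝ) - 1))⁻¹ • (Md.scal * Md.g X Y))

/-- The Weyl conformal curvature tensor. -/
def Weyl (X Y Z W : VF) : Fn := Md.Rm4 X Y Z W - KN Md.schouten Md.g X Y Z W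

/-- Conformal flatness: the Weyl tensor vanishes. -/
def ConformallyFlat : Prop := ∀ X Y Z W, Md.Weyl X Y Z W = 0

/-- Coderivative `d*T (X) = -(∇_{e_i}T)(e_i, X)` of a covariant 2-tensor. -/
def coderiv2 (T : VF → VF → Fn) (X : VF) : Fn :=
  -∑ i, (Md.D (Md.e i) (T (Md.e i) X) - T (Md.nabla (Md.e i) (Md.e i)) X
      - T (Md.e i) (Md.nabla (Md.e i) X))

/-- Coderivative `d*θ = -(∇_{e_i}θ)(e_i)` of a one-form. -/
def coderiv1 (θ : VF → Fn) : Fn :=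
  -∑ i, (Md.D (Md.e i) (θ (Md.e i)) - θ (Md.nabla (Md.e i) (Md.e i)))

end RiemannianData

/-- The intrinsic torsion `ξ_X Y = -½ φ((∇_Xφ)Y) + (∇_Xη)(Y)·ζ - ½ η(Y)·∇_Xζ` of an
almost contact metric structure `(φ, ζ)`. -/
def intrinsicTorsion {m : ℕ} {Fn VF : Type*} [CommRing Fn] [Algebra ℝ Fn]
    [AddCommGroup VF] [Module Fn VF] (Md : RiemannianData m Fn VF)
    (phi : VF → VF) (zeta : VF) (X Y : VF) : VF :=
  algebraMap ℝ Fn (-(1/2)) • phi (Md.nabla X (phi Y) - phi (Md.nabla X Y))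
    + (Md.D X (Md.g zeta Y) - Md.g zeta (Md.nabla X Y)) • zeta
    - algebraMap ℝ Fn (1/2) • (Md.g zeta Y • Md.nabla X zeta)

/-- An almost contact metric structure on a `(2n+1)`-dimensional Riemannian manifold:
a `(1,1)`-tensor field `φ` and a unit vector field `ζ` with `φ² = -I + η⊗ζ` and
`⟨φX, φY⟩ = ⟨X,Y⟩ - η(X)η(Y)`, together with the Chinea–González-Dávila decomposition
`ξ = ξ_{(1)} + ⋯ + ξ_{(12)}` of its intrinsic torsion into the components lying in the
twelve irreducible `U(n)`-modules `C_1, …, C_12` (mutually orthogonal pieces). -/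
structure ACS {Fn VF : Type*} [CommRing Fn] [Algebra ℝ Fn] [AddCommGroup VF]
    [Module Fn VF] (n : ℕ) (Md : RiemannianData (2*n+1) Fn VF) where
  phi : VF → VF
  zeta : VF
  phi_add : ∀ X Y, phi (X + Y) = phi X + phi Y
  phi_smul : ∀ (f : Fn) X, phi (f • X) = f • phi X
  zeta_unit : Md.g zeta zeta = 1
  phi_sq : ∀ X, phi (phi X) = -X + Md.g zeta X • zeta
  phi_metric : ∀ X Y, Md.g (phi X) (phi Y) = Md.g X Y - Md.g zeta X * Md.g zeta Y
  xiC : ℕ → VF → VF → VF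
  xiC_bound : ∀ i, (i = 0 ∨ 12 < i) → ∀ X Y, xiC i X Y = 0
  xiC_sum : ∀ X Y,
    intrinsicTorsion Md phi zeta X Y = ∑ i ∈ Finset.Icc 1 12, xiC i X Y
  xiC_orth : ∀ i j, i ≠ j →
    (∑ k, ∑ l, Md.g (xiC i (Md.e k) (Md.e l)) (xiC j (Md.e k) (Md.e l))) = 0

namespace ACS

variable {Fn VF : Type*} [CommRing Fn] [Algebra ℝ Fn] [AddCommGroup VF]
  [Module Fn VF] {n : ℕ} {Md : RiemannianData (2*n+1) Fn VF} (σ : ACS n Md)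

/-- The characteristic one-form `η = ζ^♭`. -/
def eta (X : VF) : Fn := Md.g σ.zeta X

/-- The intrinsic torsion `ξ` of the structure. -/
def xi : VF → VF → VF := intrinsicTorsion Md σ.phi σ.zeta

/-- `X_{ζ⊥} = X - η(X)ζ`. -/
def perp (X : VF) : VF := X - σ.eta X • σ.zeta

/-- The minimal `U(n)`-connection `∇^{U(n)} = ∇ + ξ`. -/
def nablaU (X Y : VF) : VF := Md.nabla X Y + σ.xi X Y

/-- `(∇^{U(n)}_X ξ)_Y Z`. -/
def nablaUxi (X Y Z : VF) : VF :=
  σ.nablaU X (σ.xi Y Z) - σ.xi (σ.nablaU X Y) Z - σ.xi Y (σ.nablaU X Z)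

/-- `(∇^{U(n)}_X ξ_{(k)})_Y Z`, the covariant derivative of the `C_k`-component. -/
def nablaUxiC (k : ℕ) (X Y Z : VF) : VF :=
  σ.nablaU X (σ.xiC k Y Z) - σ.xiC k (σ.nablaU X Y) Z - σ.xiC k Y (σ.nablaU X Z)

/-- Harmonicity of the structure: `(∇^{U(n)}_{e_i}ξ)_{e_i} = -ξ_{ξ_{e_i}e_i}`,
i.e. `d*ξ = 0`. -/
def Harmonic : Prop :=
  ∀ Y, (∑ i, σ.nablaUxi (Md.e i) (Md.e i) Y) = -∑ i, σ.xi (σ.xi (Md.e i) (Md.e i)) Y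

/-- The vector field `ξ_{e_i}e_i` (summation over the frame). -/
def V : VF := ∑ i, σ.xi (Md.e i) (Md.e i)

/-- The almost contact Ricci tensor `Ric^ac(X,Y) = ⟨R_{e_i,X}φe_i, φY⟩`. -/
def RicAC (X Y : VF) : Fn := ∑ i, Md.g (Md.Rm (Md.e i) X (σ.phi (Md.e i))) (σ.phi Y)

/-- The transpose `(Ric^ac)^t`. -/
def RicACt (X Y : VF) : Fn := σ.RicAC Y X

/-- The skew-symmetric part of `Ric^ac`. -/
def RicACalt (X Y : VF) : Fn := (1/2 : ℝ) • (σ.RicAC X Y - σ.RicAC Y X)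

/-- The ac-scalar curvature `s^ac = Ric^ac(e_i, e_i)`. -/
def sAC : Fn := ∑ i, σ.RicAC (Md.e i) (Md.e i)

/-- The structure is of type `⊕_{i ∈ S} C_i`: all the other components of the
intrinsic torsion vanish. -/
def OfType (S : Finset ℕ) : Prop := ∀ i ∉ S, ∀ X Y, σ.xiC i X Y = 0

/-- The fundamental two-form `F = ⟨·, φ·⟩`. -/
def Fm (X Y : VF) : Fn := Md.g X (σ.phi Y)

/-- The one-form `(ξ_W η)(X) = -η(ξ_W X)`. -/
def xiEta (W X : VF) : Fn := -σ.eta (σ.xi W X)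

/-- The one-form `ν_σ(X) = ⟨ξ_{e_i}, R_{e_i,X}⟩`. -/
def nu (X : VF) : Fn :=
  ∑ i, ∑ j, Md.g (σ.xi (Md.e i) (Md.e j)) (Md.Rm (Md.e i) X (Md.e j))

/-- The structure, viewed as a section of `SO(M)/(U(n)×1)`, is a harmonic map:
it is a harmonic structure and the one-form `ν_σ` vanishes. -/
def IsHarmonicMap : Prop := σ.Harmonic ∧ ∀ X, σ.nu X = 0

/-- `d*F(ζ)`, the coderivative of the fundamental two-form evaluated at `ζ`. -/
def dstarFzeta : Fn := Md.coderiv2 σ.Fm σ.zeta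

/-- `d*η`, the coderivative of the characteristic one-form. -/
def dstarEta : Fn := Md.coderiv1 σ.eta

/-- `(∇_X φ)(Z)`. -/
def nablaPhi (X Z : VF) : VF := Md.nabla X (σ.phi Z) - σ.phi (Md.nabla X Z)

/-- The rough Laplacian `∇*∇φ` of `φ`. -/
def lapPhi (Z : VF) : VF :=
  -∑ i, (Md.nabla (Md.e i) (σ.nablaPhi (Md.e i) Z)
    - σ.nablaPhi (Md.e i) (Md.nabla (Md.e i) Z)
    - σ.nablaPhi (Md.nabla (Md.e i) (Md.e i)) Z)

/-- The rough Laplacian `∇*∇ζ` of `ζ`. -/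
def lapZeta : VF :=
  -∑ i, (Md.nabla (Md.e i) (Md.nabla (Md.e i) σ.zeta)
    - Md.nabla (Md.nabla (Md.e i) (Md.e i)) σ.zeta)

/-- `(∇_X F)(Y,Z)`. -/
def nablaF (X Y Z : VF) : Fn :=
  Md.D X (σ.Fm Y Z) - σ.Fm (Md.nabla X Y) Z - σ.Fm Y (Md.nabla X Z)

/-- The rough Laplacian `∇*∇F` of the fundamental two-form. -/
def lapF (Y Z : VF) : Fn :=
  -∑ i, (Md.D (Md.e i) (σ.nablaF (Md.e i) Y Z)
    - σ.nablaF (Md.e i) (Md.nabla (Md.e i) Y) Z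
    - σ.nablaF (Md.e i) Y (Md.nabla (Md.e i) Z)
    - σ.nablaF (Md.nabla (Md.e i) (Md.e i)) Y Z)

/-- `‖ξ‖²` as a function on `M`. -/
def normXi : Fn := ∑ i, ∑ j, Md.g (σ.xi (Md.e i) (Md.e j)) (σ.xi (Md.e i) (Md.e j))

/-- `‖ξ_{(k)}‖²` as a function on `M`. -/
def normXiC (k : ℕ) : Fn :=
  ∑ i, ∑ j, Md.g (σ.xiC k (Md.e i) (Md.e j)) (σ.xiC k (Md.e i) (Md.e j))

/-- The total bending `B(σ) = ½∫_M ‖ξ‖² dv`. -/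
def bending : ℝ := (1/2) * Md.integral σ.normXi

/-- The energy of the structure as a section of `SO(M)/(U(n)×1)`. -/
def energy : ℝ := ((2*(n:ℝ)+1)/2) * Md.integral 1 + σ.bending

/-- Weakly-ac-Einstein: `Ric^ac = (s^ac/2n)(⟨·,·⟩ - η⊗η)`. -/
def WeaklyACEinstein : Prop :=
  ∀ X Y, σ.RicAC X Y = (1/(2*(n:ℝ))) • (σ.sAC * (Md.g X Y - σ.eta X * σ.eta Y))

/-- `⟨R_{e_i,X}, ξ_{φe_i}φ⟩` (summation over the frame), the inner product of the
skew-symmetric endomorphisms `R_{e_i,X}` and `ξ_{φe_i}∘φ`. -/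
def innerRxiphi (X : VF) : Fn :=
  ∑ i, ∑ j, Md.g (Md.Rm (Md.e i) X (Md.e j)) (σ.xi (σ.phi (Md.e i)) (σ.phi (Md.e j)))

/-- `⟨Ric^ac, ξ^♭_X⟩`, the inner product of the covariant 2-tensors `Ric^ac` and
`ξ^♭_X(Y,Z) = ⟨ξ_X Y, Z⟩`. -/
def innerRicXi (X : VF) : Fn :=
  ∑ j, ∑ k, σ.RicAC (Md.e j) (Md.e k) * Md.g (σ.xi X (Md.e j)) (Md.e k)

end ACS

/-!
For this type the intrinsic torsion `ξ_X = (∇_Xζ)^♭ ⊗ ζ - η ⊗ ∇_Xζ` is built from `∇ζ` alone, so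
`Σ (∇_{e_i} ξ)_{e_i} = η ⊗ ∇*∇ζ - (∇*∇ζ)^♭ ⊗ ζ`. The quadratic terms of `∇^{U(n)} = ∇ + ξ`
contribute exactly `-ξ_{ξ_{e_i}e_i}`, so harmonicity says `Σ (∇_{e_i} ξ)_{e_i} = 0`, i.e. that `∇*∇ζ`
is pointwise proportional to `ζ`; as `ζ` is a unit field the factor is `⟨∇*∇ζ, ζ⟩ = ‖∇ζ‖²`.
-/

namespace RiemannianData

variable {m : ℕ} {Fn VF : Type*} [CommRing Fn] [Algebra ℝ Fn]
  [AddCommGroup VF] [Module Fn VF] (Md : RiemannianData m Fn VF)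

def gLeft (Y : VF) : VF →ₗ[Fn] Fn where
  toFun X := Md.g X Y
  map_add' X X' := Md.g_addLeft X X' Y
  map_smul' f X := Md.g_smulLeft f X Y

def nablaRight (X : VF) : VF →+ VF := AddMonoidHom.mk' (Md.nabla X) (Md.nabla_addRight X)

lemma g_neg_left (X Y : VF) : Md.g (-X) Y = -Md.g X Y := (Md.gLeft Y).map_neg X

lemma g_sub_left (X X' Y : VF) : Md.g (X - X') Y = Md.g X Y - Md.g X' Y :=
  (Md.gLeft Y).map_sub X X'

lemma g_sum_left {ι : Type*} (s : Finset ι) (B : ι → VF) (Y : VF) :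
    Md.g (∑ i ∈ s, B i) Y = ∑ i ∈ s, Md.g (B i) Y :=
  map_sum (Md.gLeft Y) B s

lemma g_add_right (X Y Z : VF) : Md.g X (Y + Z) = Md.g X Y + Md.g X Z := by
  rw [Md.g_symm, Md.g_addLeft, Md.g_symm Y, Md.g_symm Z]

lemma nabla_sub_right (X Y Z : VF) : Md.nabla X (Y - Z) = Md.nabla X Y - Md.nabla X Z :=
  (Md.nablaRight X).map_sub Y Z

lemma D_zero (X : VF) : Md.D X 0 = 0 := by
  simpa using Md.D_const X 0

lemma D_one (X : VF) : Md.D X 1 = 0 := by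
  simpa using Md.D_const X 1

/-- The second covariant derivative `∇²_{X,Y} Z`. -/
def hessian (X Y Z : VF) : VF := Md.nabla X (Md.nabla Y Z) - Md.nabla (Md.nabla X Y) Z

def roughLaplacian (Z : VF) : VF := -∑ i, Md.hessian (Md.e i) (Md.e i) Z

section UnitField

variable {Md} {Z : VF} (hZ : Md.g Z Z = 1)
include hZ

lemma g_nabla_self_of_unit (X : VF) : Md.g (Md.nabla X Z) Z = 0 := by
  have h := Md.metric_compat X Z Z
  rw [hZ, D_one, Md.g_symm Z] at h
  have h2 : (2 : ℝ) • Md.g (Md.nabla X Z) Z = 0 := by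
    rw [two_smul]; exact h.symm
  exact (smul_eq_zero.mp h2).resolve_left two_ne_zero

lemma g_hessian_self_of_unit (X : VF) :
    Md.g (Md.hessian X X Z) Z = -Md.g (Md.nabla X Z) (Md.nabla X Z) := by
  have h := Md.metric_compat X (Md.nabla X Z) Z
  rw [g_nabla_self_of_unit hZ, D_zero] at h
  rw [hessian, g_sub_left, g_nabla_self_of_unit hZ]
  linear_combination -h

lemma g_roughLaplacian_self_of_unit :
    Md.g (Md.roughLaplacian Z) Z = ∑ i, Md.g (Md.nabla (Md.e i) Z) (Md.nabla (Md.e i) Z) := by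
  simp only [roughLaplacian, g_neg_left, g_sum_left, g_hessian_self_of_unit hZ,
    Finset.sum_neg_distrib, neg_neg]

lemma forall_g_smul_eq_iff_of_unit (W : VF) :
    (∀ Y, Md.g Z Y • W = Md.g W Y • Z) ↔ W = Md.g W Z • Z := by
  refine ⟨fun h => by simpa [hZ] using h Z, fun h Y => ?_⟩
  rw [h, Md.g_smulLeft, smul_smul, mul_comm]

end UnitField

end RiemannianData

namespace ACS

variable {Fn VF : Type*} [CommRing Fn] [Algebra ℝ Fn] [AddCommGroup VF]
  [Module Fn VF] {n : ℕ} {Md : RiemannianData (2*n+1) Fn VF} (σ : ACS n Md)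

lemma eta_add (Y Y' : VF) : σ.eta (Y + Y') = σ.eta Y + σ.eta Y' :=
  Md.g_add_right _ _ _

lemma nablaPhi_add_left (X X' Y : VF) :
    σ.nablaPhi (X + X') Y = σ.nablaPhi X Y + σ.nablaPhi X' Y := by
  simp only [nablaPhi, Md.nabla_addLeft, σ.phi_add]
  abel

lemma nablaPhi_add_right (X Y Y' : VF) :
    σ.nablaPhi X (Y + Y') = σ.nablaPhi X Y + σ.nablaPhi X Y' := by
  simp only [nablaPhi, Md.nabla_addRight, σ.phi_add]
  abel

lemma xi_eq (X Y : VF) :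
    σ.xi X Y = algebraMap ℝ Fn (-(1/2)) • σ.phi (σ.nablaPhi X Y)
      + Md.g (Md.nabla X σ.zeta) Y • σ.zeta
      - algebraMap ℝ Fn (1/2) • (σ.eta Y • Md.nabla X σ.zeta) := by
  rw [xi, intrinsicTorsion, Md.metric_compat, add_sub_cancel_right]
  rfl

lemma xi_add_left (X X' Y : VF) : σ.xi (X + X') Y = σ.xi X Y + σ.xi X' Y := by
  simp only [xi_eq, nablaPhi_add_left, σ.phi_add, Md.nabla_addLeft, Md.g_addLeft]
  module

lemma xi_add_right (X Y Y' : VF) : σ.xi X (Y + Y') = σ.xi X Y + σ.xi X Y' := by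
  simp only [xi_eq, nablaPhi_add_right, σ.phi_add, Md.g_add_right, eta_add]
  module

lemma nablaUxi_self (X Y : VF) :
    σ.nablaUxi X X Y =
      (Md.nabla X (σ.xi X Y) - σ.xi (Md.nabla X X) Y - σ.xi X (Md.nabla X Y))
        - σ.xi (σ.xi X X) Y := by
  simp only [nablaUxi, nablaU, xi_add_left, xi_add_right]
  abel

lemma lapZeta_eq_roughLaplacian : σ.lapZeta = Md.roughLaplacian σ.zeta := rfl

section TorsionOfZeta

variable {σ} (hξ : ∀ X Y, σ.xi X Y =
  Md.g (Md.nabla X σ.zeta) Y • σ.zeta - Md.g σ.zeta Y • Md.nabla X σ.zeta)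
include hξ

lemma nabla_xi_self (X Y : VF) :
    Md.nabla X (σ.xi X Y) - σ.xi (Md.nabla X X) Y - σ.xi X (Md.nabla X Y) =
      Md.g (Md.hessian X X σ.zeta) Y • σ.zeta - Md.g σ.zeta Y • Md.hessian X X σ.zeta := by
  rw [hξ, hξ, hξ, Md.nabla_sub_right, Md.nabla_leibniz, Md.nabla_leibniz,
    Md.metric_compat X (Md.nabla X σ.zeta) Y, Md.metric_compat X σ.zeta Y,
    RiemannianData.hessian, Md.g_sub_left]
  module

lemma harmonic_iff_forall_g_smul_lapZeta :
    σ.Harmonic ↔ ∀ Y, Md.g σ.zeta Y • σ.lapZeta = Md.g σ.lapZeta Y • σ.zeta := by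
  have hsum : ∀ Y, ∑ i, σ.nablaUxi (Md.e i) (Md.e i) Y =
      (Md.g σ.zeta Y • σ.lapZeta - Md.g σ.lapZeta Y • σ.zeta)
        - ∑ i, σ.xi (σ.xi (Md.e i) (Md.e i)) Y := fun Y => by
    simp only [nablaUxi_self, Finset.sum_sub_distrib, nabla_xi_self hξ, ← Finset.sum_smul,
      ← Finset.smul_sum, ← Md.g_sum_left, lapZeta_eq_roughLaplacian,
      RiemannianData.roughLaplacian, Md.g_neg_left, neg_smul, smul_neg]
    abel
  simp only [Harmonic, hsum, sub_eq_neg_self, sub_eq_zero]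

end TorsionOfZeta

end ACS

theorem harmonic_iff_zeta_harmonic_general {Fn VF : Type*} [CommRing Fn] [Algebra ℝ Fn]
    [AddCommGroup VF] [Module Fn VF] {n : ℕ}
    {Md : RiemannianData (2*n+1) Fn VF} (σ : ACS n Md)
    (hxi : ∀ X Y : VF, σ.xi X Y =
      (Md.D X (σ.eta Y) - σ.eta (Md.nabla X Y)) • σ.zeta - σ.eta Y • Md.nabla X σ.zeta) :
    σ.Harmonic ↔
      σ.lapZeta =
        (∑ i, Md.g (Md.nabla (Md.e i) σ.zeta) (Md.nabla (Md.e i) σ.zeta)) • σ.zeta := by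
  have hξ : ∀ X Y, σ.xi X Y =
      Md.g (Md.nabla X σ.zeta) Y • σ.zeta - Md.g σ.zeta Y • Md.nabla X σ.zeta := fun X Y => by
    rw [hxi, ACS.eta, ACS.eta, Md.metric_compat, add_sub_cancel_right]
  rw [ACS.harmonic_iff_forall_g_smul_lapZeta hξ,
    RiemannianData.forall_g_smul_eq_iff_of_unit σ.zeta_unit,
    σ.lapZeta_eq_roughLaplacian, RiemannianData.g_roughLaplacian_self_of_unit σ.zeta_unit]

/-- for an almost contact metric structure of type
`C_5 ⊕ C_6 ⊕ C_7 ⊕ C_8 ⊕ C_9 ⊕ C_10 ⊕ C_12`, so that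
`ξ_X = (∇_Xη)⊗ζ − η⊗(∇_Xζ)`, the structure is harmonic iff `∇*∇ζ = ‖∇ζ‖²ζ`,
i.e. iff `ζ` is a harmonic unit vector field. -/
theorem harmonic_iff_zeta_harmonic {Fn VF : Type*} [CommRing Fn] [Algebra ℝ Fn]
    [AddCommGroup VF] [Module Fn VF] {n : ℕ}
    {Md : RiemannianData (2*n+1) Fn VF} (σ : ACS n Md)
    (hT : σ.OfType {5, 6, 7, 8, 9, 10, 12})
    (hxi : ∀ X Y : VF, σ.xi X Y =
      (Md.D X (σ.eta Y) - σ.eta (Md.nabla X Y)) • σ.zeta - σ.eta Y • Md.nabla X σ.zeta) :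
    σ.Harmonic ↔
      σ.lapZeta =
        (∑ i, Md.g (Md.nabla (Md.e i) σ.zeta) (Md.nabla (Md.e i) σ.zeta)) • σ.zeta :=
  harmonic_iff_zeta_harmonic_general σ hxi
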